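/- Let H be a Kreĭn space and S a subspace admitting a decomposition S = R ⊕ N with R regular and N neutral, R ⊥ N. If the decomposition with N = S∩S^⊥ is direct (R ∩ N = {0}) and R is an operator range, and S is quasi-pseudo-regular (an operator range with such a decomposition), then R is closed, hence regular. -/

import Mathlib

open ContinuousLinearMap

noncomputable section

namespace KreinPaper

variable {H : Type*} [NormedAddCommGroup H] [InnerProductSpace ℂ H] [CompleteSpace H]

/-- The indefinite orthogonal companion of a subspace, with respect to the
indefinite inner product `[x, y] = ⟪J x, y⟫`. -/
def kOrth (J : H →L[ℂ] H) (S : Submodule ℂ H) : Submodule ℂ H where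
  carrier := {y | ∀ x ∈ S, (inner ℂ (J x) y : ℂ) = 0}
  add_mem' := by
    intro a b ha hb x hx
    simp only [Set.mem_setOf_eq] at ha hb ⊢
    rw [inner_add_right, ha x hx, hb x hx, add_zero]
  zero_mem' := by
    intro x _
    exact inner_zero_right _
  smul_mem' := by
    intro c a ha x hx
    simp only [Set.mem_setOf_eq] at ha ⊢
    rw [inner_smul_right, ha x hx, mul_zero]

/-- A regular subspace: closed, with `R ∩ R^⊥ = 0` and `R + R^⊥ = H`. -/
def IsRegular (J : H →L[ℂ] H) (R : Submodule ℂ H) : Prop :=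
  IsClosed (R : Set H) ∧ R ⊓ kOrth J R = ⊥ ∧ R ⊔ kOrth J R = ⊤

/-- A neutral subspace: the indefinite inner product vanishes on it. -/
def IsNeutral (J : H →L[ℂ] H) (N : Submodule ℂ H) : Prop :=
  ∀ n ∈ N, (inner ℂ (J n) n : ℂ) = 0

/-- Two subspaces are orthogonal in the indefinite inner product. -/
def AreKOrth (J : H →L[ℂ] H) (A B : Submodule ℂ H) : Prop :=
  ∀ a ∈ A, ∀ b ∈ B, (inner ℂ (J a) b : ℂ) = 0

/-- An operator range: the range of a bounded operator (equivalently, of a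
bounded operator on `H` itself). -/
def IsOpRange (S : Submodule ℂ H) : Prop :=
  ∃ T : H →L[ℂ] H, LinearMap.range (T : H →ₗ[ℂ] H) = S

/-- Quasi-pseudo-regular subspace: an operator range which is the orthogonal
sum of a regular subspace and a neutral subspace. -/
def IsQpr (J : H →L[ℂ] H) (S : Submodule ℂ H) : Prop :=
  IsOpRange S ∧ ∃ R N : Submodule ℂ H,
    IsRegular J R ∧ IsNeutral J N ∧ AreKOrth J R N ∧ S = R ⊔ N

/-- Pseudo-regular subspace: a closed subspace which is the orthogonal
sum of a regular subspace and a neutral subspace. -/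
def IsPseudoRegular (J : H →L[ℂ] H) (S : Submodule ℂ H) : Prop :=
  IsClosed (S : Set H) ∧ ∃ R N : Submodule ℂ H,
    IsRegular J R ∧ IsNeutral J N ∧ AreKOrth J R N ∧ S = R ⊔ N

/-- A fundamental symmetry: a selfadjoint involution. -/
def IsFundSym (J : H →L[ℂ] H) : Prop :=
  IsSelfAdjoint J ∧ J ∘L J = ContinuousLinearMap.id ℂ H

/-- The indefinite (Kreĭn space) adjoint `A* = J A† J`. -/
def kAdj (J : H →L[ℂ] H) (A : H →L[ℂ] H) : H →L[ℂ] H :=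
  J ∘L (ContinuousLinearMap.adjoint A) ∘L J

/-!
Let `S = R' + N'` be the qpr decomposition and `M = R'^⊥`. Since `N'` is neutral and orthogonal
to `R'`, `S ∩ M = S⁰`; hence `M` is a closed complement of `R` (`H = R' + M` and
`R' ⊆ R + S⁰ ⊆ R + M`), and an operator range with a closed complement is closed.
For regularity, the projection `P` onto `R` along `M` maps `R'` onto `R` and moves points of `S`
only within `S⁰`, so it preserves the form on `R'`. Given `h`, the functional `[h, P ·]` on `R'`
is represented by some `z ∈ R'` because `R'` is regular, and then `h - P z ∈ R^⊥`.
-/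

section Form

variable {E : Type*} [NormedAddCommGroup E] [InnerProductSpace ℂ E]

theorem kOrth_eq_orthogonal_map (J : E →L[ℂ] E) (S : Submodule ℂ E) :
    kOrth J S = (S.map (J : E →ₗ[ℂ] E))ᗮ := by
  ext y
  simp [kOrth, Submodule.mem_orthogonal]

theorem isClosed_kOrth (J : E →L[ℂ] E) (S : Submodule ℂ E) : IsClosed (kOrth J S : Set E) := by
  rw [kOrth_eq_orthogonal_map]
  exact Submodule.isClosed_orthogonal _

theorem kOrth_anti (J : E →L[ℂ] E) {S₁ S₂ : Submodule ℂ E} (h : S₁ ≤ S₂) :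
    kOrth J S₂ ≤ kOrth J S₁ :=
  fun _ hy x hx => hy x (h hx)

theorem kOrth_sup (J : E →L[ℂ] E) (A B : Submodule ℂ E) :
    kOrth J (A ⊔ B) = kOrth J A ⊓ kOrth J B := by
  simp only [kOrth_eq_orthogonal_map, Submodule.map_sup, Submodule.inf_orthogonal]

theorem conj_inner_apply {J : E →L[ℂ] E} (hJ : (J : E →ₗ[ℂ] E).IsSymmetric) (x y : E) :
    starRingEnd ℂ (inner ℂ (J x) y) = inner ℂ (J y) x := by
  rw [inner_conj_symm]
  exact (hJ y x).symm

theorem le_kOrth_comm {J : E →L[ℂ] E} (hJ : (J : E →ₗ[ℂ] E).IsSymmetric)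
    {A B : Submodule ℂ E} : A ≤ kOrth J B ↔ B ≤ kOrth J A := by
  constructor <;> intro h x hx y hy <;> rw [← conj_inner_apply hJ, h hy x hx, map_zero]

theorem IsNeutral.le_kOrth {J : E →L[ℂ] E} {N : Submodule ℂ E} (hN : IsNeutral J N) :
    N ≤ kOrth J N := by
  intro y hy x hx
  have h := inner_map_polarization (J : E →ₗ[ℂ] E) y x
  simp only [ContinuousLinearMap.coe_coe] at h
  rw [h, hN _ (N.add_mem hy hx), hN _ (N.sub_mem hy hx), hN _ (N.add_mem hy (N.smul_mem _ hx)),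
    hN _ (N.sub_mem hy (N.smul_mem _ hx))]
  simp

theorem inner_apply_eq_of_sub_mem_kOrth {J : E →L[ℂ] E} (hJ : (J : E →ₗ[ℂ] E).IsSymmetric)
    {S : Submodule ℂ E} {x x' y y' : E} (hx : x ∈ S) (hy' : y' ∈ S)
    (hxx' : x - x' ∈ kOrth J S) (hyy' : y - y' ∈ kOrth J S) :
    inner ℂ (J x) y = inner ℂ (J x') y' := by
  have h₁ : inner ℂ (J x) (y - y') = 0 := hyy' x hx
  have h₂ : inner ℂ (J (x - x')) y' = 0 := by
    rw [← conj_inner_apply hJ, hxx' y' hy', map_zero]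
  rw [inner_sub_right] at h₁
  rw [map_sub, inner_sub_left] at h₂
  linear_combination h₁ + h₂

theorem inf_kOrth_le_kOrth_sup {J : E →L[ℂ] E} {R N : Submodule ℂ E}
    (hR : R ⊓ kOrth J R = ⊥) (hN : IsNeutral J N) (hRN : AreKOrth J R N) :
    (R ⊔ N) ⊓ kOrth J R ≤ kOrth J (R ⊔ N) := by
  have hNR : N ≤ kOrth J R := fun b hb a ha => hRN a ha b hb
  rw [sup_comm, sup_inf_assoc_of_le R hNR, hR, sup_bot_eq, sup_comm, kOrth_sup]
  exact le_inf hNR hN.le_kOrth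

theorem inf_kOrth_eq_bot_of_eq_sup_isotropic {J : E →L[ℂ] E}
    (hJ : (J : E →ₗ[ℂ] E).IsSymmetric) {S R : Submodule ℂ E}
    (hdir : R ⊓ (S ⊓ kOrth J S) = ⊥) (hsum : S = R ⊔ (S ⊓ kOrth J S)) :
    R ⊓ kOrth J R = ⊥ := by
  have hRS : R ≤ S := hsum ▸ le_sup_left
  have hRN : R ≤ kOrth J (S ⊓ kOrth J S) :=
    (le_kOrth_comm hJ).2 (inf_le_right.trans (kOrth_anti J hRS))
  have hkS : kOrth J S = kOrth J R ⊓ kOrth J (S ⊓ kOrth J S) := by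
    rw [← kOrth_sup, ← hsum]
  refine eq_bot_iff.2 (hdir ▸ le_inf inf_le_left (le_inf (inf_le_left.trans hRS) ?_))
  rw [hkS]
  exact le_inf inf_le_right (inf_le_left.trans hRN)

theorem isCompl_kOrth_of_eq_sup_isotropic {J : E →L[ℂ] E} {S R R' : Submodule ℂ E}
    (hR' : R' ⊔ kOrth J R' = ⊤) (hR'S : R' ≤ S) (hSR' : S ⊓ kOrth J R' ≤ kOrth J S)
    (hdir : R ⊓ (S ⊓ kOrth J S) = ⊥) (hsum : S = R ⊔ (S ⊓ kOrth J S)) :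
    IsCompl R (kOrth J R') := by
  have hRS : R ≤ S := hsum ▸ le_sup_left
  constructor
  · rw [disjoint_iff, eq_bot_iff, ← hdir]
    exact le_inf inf_le_left <| le_inf (inf_le_left.trans hRS) <|
      (inf_le_inf_right _ hRS).trans hSR'
  · have hNR' : S ⊓ kOrth J S ≤ kOrth J R' := inf_le_right.trans (kOrth_anti J hR'S)
    rw [codisjoint_iff, eq_top_iff]
    calc ⊤ = R' ⊔ kOrth J R' := hR'.symm
      _ ≤ S ⊔ kOrth J R' := sup_le_sup_right hR'S _
      _ ≤ R ⊔ kOrth J R' := sup_le (hsum.le.trans (sup_le_sup_left hNR' R)) le_sup_right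

end Form

/-- Restricting `T` to `(ker T)ᗮ` makes it injective without changing its range. -/
theorem IsOpRange.isClosed_of_isCompl {R M : Submodule ℂ H} (hR : IsOpRange R)
    (hRM : IsCompl R M) (hM : IsClosed (M : Set H)) : IsClosed (R : Set H) := by
  obtain ⟨T, rfl⟩ := hR
  set K := (LinearMap.ker (T : H →ₗ[ℂ] H))ᗮ
  have : CompleteSpace K := (Submodule.isClosed_orthogonal _).completeSpace_coe
  have hrange : LinearMap.range (T ∘L K.subtypeL : K →ₗ[ℂ] H) =
      LinearMap.range (T : H →ₗ[ℂ] H) := by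
    refine le_antisymm (LinearMap.range_comp_le_range _ _) ?_
    rw [ContinuousLinearMap.toLinearMap_comp, LinearMap.range_comp,
      Submodule.toLinearMap_subtypeL, Submodule.range_subtype, LinearMap.range_eq_map,
      LinearMap.map_le_map_iff, sup_comm, Submodule.sup_orthogonal_of_hasOrthogonalProjection]
  have hker : LinearMap.ker (T ∘L K.subtypeL : K →ₗ[ℂ] H) = ⊥ := by
    rw [ContinuousLinearMap.toLinearMap_comp, LinearMap.ker_comp,
      Submodule.toLinearMap_subtypeL, ← Submodule.disjoint_iff_comap_eq_bot]
    exact (Submodule.orthogonal_disjoint _).symm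
  rw [← hrange] at hRM ⊢
  exact (T ∘L K.subtypeL).closed_complemented_range_of_isCompl_of_ker_eq_bot M hRM hM hker

theorem IsFundSym.isSymmetric {J : H →L[ℂ] H} (hJ : IsFundSym J) :
    (J : H →ₗ[ℂ] H).IsSymmetric :=
  hJ.1.isSymmetric

theorem IsFundSym.apply_apply {J : H →L[ℂ] H} (hJ : IsFundSym J) (x : H) : J (J x) = x :=
  ContinuousLinearMap.ext_iff.1 hJ.2 x

theorem IsRegular.exists_inner_eq {J : H →L[ℂ] H} (hJ : IsFundSym J) {R : Submodule ℂ H}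
    (hR : IsRegular J R) (f : R →L[ℂ] ℂ) : ∃ z ∈ R, ∀ y : R, f y = inner ℂ (J z) y := by
  have : CompleteSpace R := hR.1.completeSpace_coe
  set u := (InnerProductSpace.toDual ℂ R).symm f
  have hu : J u ∈ R ⊔ kOrth J R := hR.2.2 ▸ Submodule.mem_top
  obtain ⟨z, hz, m, hm, hzm⟩ := Submodule.mem_sup.1 hu
  refine ⟨z, hz, fun y => ?_⟩
  calc f y = inner ℂ (u : H) y := (InnerProductSpace.toDual_symm_apply).symm
    _ = inner ℂ (J (z + m)) y := by rw [hzm, hJ.apply_apply]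
    _ = inner ℂ (J z) y := by
      rw [map_add, inner_add_left, ← conj_inner_apply hJ.isSymmetric (y : H) m, hm y y.2,
        map_zero, add_zero]

theorem IsRegular.sup_kOrth_map_eq_top {J : H →L[ℂ] H} (hJ : IsFundSym J) {R : Submodule ℂ H}
    (hR : IsRegular J R) (P : H →L[ℂ] H)
    (hP : ∀ y ∈ R, ∀ y' ∈ R, inner ℂ (J (P y)) (P y') = inner ℂ (J y) y') :
    R.map (P : H →ₗ[ℂ] H) ⊔ kOrth J (R.map (P : H →ₗ[ℂ] H)) = ⊤ := by
  refine eq_top_iff.2 fun h _ => ?_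
  obtain ⟨z, hz, hzψ⟩ := hR.exists_inner_eq hJ (innerSL ℂ (J h) ∘L P ∘L R.subtypeL)
  refine Submodule.mem_sup.2 ⟨P z, Submodule.mem_map_of_mem hz, h - P z, ?_, add_sub_cancel _ _⟩
  rintro _ ⟨y, hy, rfl⟩
  have hψ : inner ℂ (J h) (P y) = inner ℂ (J z) y := hzψ ⟨y, hy⟩
  rw [ContinuousLinearMap.coe_coe, inner_sub_right, hP y hy z hz,
    ← conj_inner_apply hJ.isSymmetric h, hψ, conj_inner_apply hJ.isSymmetric, sub_self]

theorem sup_kOrth_eq_top_of_isCompl {J : H →L[ℂ] H} (hJ : IsFundSym J) {S R R' : Submodule ℂ H}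
    (hR' : IsRegular J R') (hR'S : R' ≤ S) (hRS : R ≤ S) (hR : IsClosed (R : Set H))
    (hcompl : IsCompl R (kOrth J R')) (hSR' : S ⊓ kOrth J R' ≤ kOrth J S) :
    R ⊔ kOrth J R = ⊤ := by
  have hTop := Submodule.IsCompl.isTopCompl_of_isClosed hcompl hR (isClosed_kOrth J R')
  set P := R.projectionL (kOrth J R') hTop
  have hsub (x : H) : x - P x ∈ kOrth J R' := Submodule.sub_projection_mem hTop.isCompl x
  have hmap : R'.map (P : H →ₗ[ℂ] H) = R := by
    refine le_antisymm (fun _ ⟨y, _, hy⟩ => hy ▸ Submodule.projectionL_apply_mem hTop y) ?_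
    intro x hx
    have hx' : x ∈ R' ⊔ kOrth J R' := hR'.2.2 ▸ Submodule.mem_top
    obtain ⟨y, hy, m, hm, rfl⟩ := Submodule.mem_sup.1 hx'
    refine ⟨y, hy, ?_⟩
    calc P y = P (y + m) := by
          rw [map_add, Submodule.projectionL_apply_eq_zero_of_mem_right hTop hm, add_zero]
      _ = y + m := Submodule.projectionL_apply_left hTop ⟨y + m, hx⟩
  have hiso (y : H) (hy : y ∈ R') : P y - y ∈ kOrth J S :=
    hSR' ⟨S.sub_mem (hRS (Submodule.projectionL_apply_mem hTop y)) (hR'S hy),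
      neg_sub y (P y) ▸ (kOrth J R').neg_mem (hsub y)⟩
  rw [← hmap]
  exact hR'.sup_kOrth_map_eq_top hJ P fun y hy y' hy' =>
    inner_apply_eq_of_sub_mem_kOrth hJ.isSymmetric (hRS (Submodule.projectionL_apply_mem hTop y))
      (hR'S hy') (hiso y hy) (hiso y' hy')

theorem qpr_direct_summand_regular_general (J : H →L[ℂ] H) (hJ : IsFundSym J)
    (S R : Submodule ℂ H) (hSqpr : IsQpr J S) (hRop : IsOpRange R)
    (hdir : R ⊓ (S ⊓ kOrth J S) = ⊥)
    (hsum : S = R ⊔ (S ⊓ kOrth J S)) :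
    IsClosed (R : Set H) ∧ IsRegular J R := by
  obtain ⟨-, R', N', hR', hN', hR'N', hS⟩ := hSqpr
  have hR'S : R' ≤ S := hS ▸ le_sup_left
  have hSR' : S ⊓ kOrth J R' ≤ kOrth J S := hS ▸ inf_kOrth_le_kOrth_sup hR'.2.1 hN' hR'N'
  have hcompl : IsCompl R (kOrth J R') :=
    isCompl_kOrth_of_eq_sup_isotropic hR'.2.2 hR'S hSR' hdir hsum
  have hR : IsClosed (R : Set H) := hRop.isClosed_of_isCompl hcompl (isClosed_kOrth J R')
  exact ⟨hR, hR, inf_kOrth_eq_bot_of_eq_sup_isotropic hJ.isSymmetric hdir hsum,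
    sup_kOrth_eq_top_of_isCompl hJ hR' hR'S (hsum ▸ le_sup_left) hR hcompl hSR'⟩

/-- if `S` is qpr, `R` is an operator range, and
`S = R ⊕ S⁰` is an orthogonal direct sum with `S⁰ = S ∩ S^⊥`, then `R` is
closed, hence regular. -/
theorem qpr_direct_summand_regular (J : H →L[ℂ] H) (hJ : IsFundSym J)
    (S R : Submodule ℂ H) (hSqpr : IsQpr J S) (hRop : IsOpRange R)
    (hNneut : IsNeutral J (S ⊓ kOrth J S))
    (horth : AreKOrth J R (S ⊓ kOrth J S))
    (hdir : R ⊓ (S ⊓ kOrth J S) = ⊥)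
    (hsum : S = R ⊔ (S ⊓ kOrth J S)) :
    IsClosed (R : Set H) ∧ IsRegular J R :=
  qpr_direct_summand_regular_general J hJ S R hSqpr hRop hdir hsum

end KreinPaper
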